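/- Conservation of discrete momentum for the modified semi-discrete discontinuous Galerkin scheme: if (C_0,…,C_{N_H−1}, E, Φ) solves the semi-discrete DG scheme with the DG Poisson solver, then t ↦ ∫_0^L C_1(t,x) dx is constant in t, i.e. d/dt ∫_0^L C_1(t,x) dx = 0. -/

import Mathlib

open MeasureTheory Finset

noncomputable section

/-- Left (minus) one-sided limit of the piecewise polynomial with cell
polynomials `u 0, …, u (Nx−1)` at the interface `x_{i+1/2} = X i`
(interfaces `i = 0` and `i = Nx` are identified periodically). -/
def dgMinus (Nx : ℕ) (X : ℕ → ℝ) (u : ℕ → Polynomial ℝ) (i : ℕ) : ℝ :=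
  if i = 0 then (u (Nx - 1)).eval (X Nx) else (u (i - 1)).eval (X i)

/-- Right (plus) one-sided limit at the interface `X i` (periodic). -/
def dgPlus (Nx : ℕ) (X : ℕ → ℝ) (u : ℕ → Polynomial ℝ) (i : ℕ) : ℝ :=
  if i = Nx then (u 0).eval (X 0) else (u i).eval (X i)

/-- Jump `[u] = u⁺ − u⁻` at the interface `X i`. -/
def dgJump (Nx : ℕ) (X : ℕ → ℝ) (u : ℕ → Polynomial ℝ) (i : ℕ) : ℝ :=
  dgPlus Nx X u i - dgMinus Nx X u i

/-- Average `{u} = (u⁺ + u⁻)/2` at the interface `X i`. -/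
def dgAvg (Nx : ℕ) (X : ℕ → ℝ) (u : ℕ → Polynomial ℝ) (i : ℕ) : ℝ :=
  (dgPlus Nx X u i + dgMinus Nx X u i) / 2

/-- Integral over the cell `I_j = (X j, X (j+1))`. -/
def cellInt (X : ℕ → ℝ) (j : ℕ) (f : ℝ → ℝ) : ℝ :=
  ∫ x in (X j)..(X (j + 1)), f x

/-- `g_n = v_th (√(n+1) C_{n+1} + √n C_{n−1})` on each cell (the convention
`C_{−1} = 0` is handled by `√0 = 0` and truncated subtraction). -/
def dgG (vth : ℝ) (Cf : ℕ → ℕ → Polynomial ℝ) (n j : ℕ) : Polynomial ℝ :=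
  vth • (Real.sqrt (n + 1) • Cf (n + 1) j + Real.sqrt n • Cf (n - 1) j)

/-- Global Lax–Friedrichs flux
`ĝ_n = (1/2)(g_n⁻ + g_n⁺ − α (C_n⁺ − C_n⁻))` with `α = v_th √N_H`. -/
def dgGhat (vth : ℝ) (NH Nx : ℕ) (X : ℕ → ℝ) (Cf : ℕ → ℕ → Polynomial ℝ)
    (n i : ℕ) : ℝ :=
  (1 / 2) * (dgMinus Nx X (dgG vth Cf n) i + dgPlus Nx X (dgG vth Cf n) i
    - vth * Real.sqrt NH *
        (dgPlus Nx X (Cf n) i - dgMinus Nx X (Cf n) i))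

/-- `Ĉ_1 = ĝ_0 / v_th`. -/
def dgC1hat (vth : ℝ) (NH Nx : ℕ) (X : ℕ → ℝ) (Cf : ℕ → ℕ → Polynomial ℝ)
    (i : ℕ) : ℝ :=
  dgGhat vth NH Nx X Cf 0 i / vth

/-- The convective DG form
`a_n^j(g_n, φ) = −∫_{I_j} g_n φ' + ĝ_{n,j+1/2} φ(x_{j+1/2}⁻) − ĝ_{n,j−1/2} φ(x_{j−1/2}⁺)`. -/
def dgA (vth : ℝ) (NH Nx : ℕ) (X : ℕ → ℝ) (Cf : ℕ → ℕ → Polynomial ℝ)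
    (n j : ℕ) (φ : Polynomial ℝ) : ℝ :=
  -(cellInt X j fun x => (dgG vth Cf n j).eval x * φ.derivative.eval x)
    + dgGhat vth NH Nx X Cf n (j + 1) * φ.eval (X (j + 1))
    - dgGhat vth NH Nx X Cf n j * φ.eval (X j)

/-- The residual `⟨r_1^j, φ⟩`. -/
def dgR1 (vth β : ℝ) (Nx : ℕ) (X : ℕ → ℝ) (Ef Φf : ℕ → Polynomial ℝ)
    (j : ℕ) (φ : Polynomial ℝ) : ℝ :=
  -(β / (2 * vth ^ 2)) *
    ((dgJump Nx X Φf j * dgJump Nx X Ef j) * φ.eval (X j)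
      + (dgJump Nx X Φf (j + 1) * dgJump Nx X Ef (j + 1)) * φ.eval (X (j + 1)))

/-- The residual `⟨r_2^j, φ⟩`. -/
def dgR2 (vth : ℝ) (NH Nx : ℕ) (X : ℕ → ℝ) (Cf : ℕ → ℕ → Polynomial ℝ)
    (Φf : ℕ → Polynomial ℝ) (j : ℕ) (φ : Polynomial ℝ) : ℝ :=
  (1 / (Real.sqrt 2 * vth)) *
    ((dgAvg Nx X (Cf 1) j - dgC1hat vth NH Nx X Cf j) * dgJump Nx X Φf j *
        φ.eval (X j)
      + (dgAvg Nx X (Cf 1) (j + 1) - dgC1hat vth NH Nx X Cf (j + 1)) *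
          dgJump Nx X Φf (j + 1) * φ.eval (X (j + 1)))

/-- The residual `⟨r_n^j, φ⟩` (zero for `n ∉ {1, 2}`). -/
def dgR (vth β : ℝ) (NH Nx : ℕ) (X : ℕ → ℝ) (Cf : ℕ → ℕ → Polynomial ℝ)
    (Ef Φf : ℕ → Polynomial ℝ) (n j : ℕ) (φ : Polynomial ℝ) : ℝ :=
  if n = 1 then dgR1 vth β Nx X Ef Φf j φ
  else if n = 2 then dgR2 vth NH Nx X Cf Φf j φ
  else 0

/-- The source form `b_n^j(C, E, Φ, φ) = −(√n/v_th) ∫_{I_j} E C_{n−1} φ − ⟨r_n^j, φ⟩`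
(for `n = 0` this is `0` since `√0 = 0` and `r_0 = 0`). -/
def dgB (vth β : ℝ) (NH Nx : ℕ) (X : ℕ → ℝ) (Cf : ℕ → ℕ → Polynomial ℝ)
    (Ef Φf : ℕ → Polynomial ℝ) (n j : ℕ) (φ : Polynomial ℝ) : ℝ :=
  -(Real.sqrt n / vth) *
      (cellInt X j fun x => (Ef j).eval x * (Cf (n - 1) j).eval x * φ.eval x)
    - dgR vth β NH Nx X Cf Ef Φf n j φ

/-- The local DG scheme for the Poisson equation with source `C_0`, with
fluxes `Φ̂ = {Φ}` and `Ê = {E} − β [Φ]`. -/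
def dgPoisson (vth ρ0 β : ℝ) (k Nx : ℕ) (X : ℕ → ℝ)
    (C0f Ef Φf : ℕ → Polynomial ℝ) : Prop :=
  ∀ j < Nx, ∀ ψ : Polynomial ℝ, ψ.natDegree ≤ k →
    ((cellInt X j fun x => (Φf j).eval x * ψ.derivative.eval x)
        - dgAvg Nx X Φf (j + 1) * ψ.eval (X (j + 1))
        + dgAvg Nx X Φf j * ψ.eval (X j)
      = cellInt X j fun x => (Ef j).eval x * ψ.eval x)
    ∧ (-(cellInt X j fun x => (Ef j).eval x * ψ.derivative.eval x)
        + (dgAvg Nx X Ef (j + 1) - β * dgJump Nx X Φf (j + 1)) *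
            ψ.eval (X (j + 1))
        - (dgAvg Nx X Ef j - β * dgJump Nx X Φf j) * ψ.eval (X j)
      = cellInt X j fun x => (vth * (C0f j).eval x - ρ0) * ψ.eval x)

/-- `∫_0^L u dx` for a piecewise polynomial `u`. -/
def dgTotInt (Nx : ℕ) (X : ℕ → ℝ) (u : ℕ → Polynomial ℝ) : ℝ :=
  ∑ j ∈ Finset.range Nx, cellInt X j fun x => (u j).eval x

/-- The discrete total energy
`ℰ_h = (1/2) ∫_0^L [v_th³(√2 C_2 + C_0) + E²] dx + (β/2) Σ_j [Φ]_{j−1/2}²`. -/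
def dgEnergy (vth β : ℝ) (Nx : ℕ) (X : ℕ → ℝ) (Cf : ℕ → ℕ → Polynomial ℝ)
    (Ef Φf : ℕ → Polynomial ℝ) : ℝ :=
  (1 / 2) * ∑ j ∈ Finset.range Nx,
      (cellInt X j fun x =>
        vth ^ 3 * (Real.sqrt 2 * (Cf 2 j).eval x + (Cf 0 j).eval x)
          + ((Ef j).eval x) ^ 2)
    + (β / 2) * ∑ j ∈ Finset.range Nx, (dgJump Nx X Φf j) ^ 2

end

/-! Testing the equation for `C_1` with `φ = 1` kills the volume term and the Lax–Friedrichs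
fluxes telescope around the periodic mesh, so `d/dt ∫ C_1 = (1/v_th) ∫ E C_0 + Σ_j ⟨r_1^j, 1⟩`.
Testing the Poisson scheme with `ζ = E` and `ψ = 1` is the discrete form of
`∫ E (v_th C_0 − ρ0) = ∫ E E' = 0`: cell by cell it gives a difference of interface fluxes,
and after summation only `v_th ∫ E C_0 = β Σ_j [Φ][E]` survives, which the residual `r_1`
cancels exactly. -/

theorem Finset.sum_range_shift_of_eq {M : Type*} [AddCommGroup M] {n : ℕ} (f : ℕ → M)
    (hf : f n = f 0) :
    ∑ j ∈ range n, f (j + 1) = ∑ j ∈ range n, f j :=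
  add_right_cancel (b := f 0) <| by rw [← sum_range_succ', sum_range_succ, hf]

theorem Polynomial.integral_eval_mul_derivative_eval (p : Polynomial ℝ) (a b : ℝ) :
    ∫ x in a..b, p.eval x * p.derivative.eval x = (p.eval b ^ 2 - p.eval a ^ 2) / 2 := by
  have hderiv : ∀ x ∈ Set.uIcc a b,
      HasDerivAt (fun y => p.eval y ^ 2 / 2) (p.eval x * p.derivative.eval x) x := by
    intro x _
    have h : HasDerivAt (fun y => p.eval y ^ 2 / 2)
        ((2 : ℕ) * p.eval x ^ (2 - 1) * p.derivative.eval x / 2) x :=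
      ((p.hasDerivAt x).fun_pow 2).div_const 2
    convert h using 1
    push_cast
    ring
  rw [intervalIntegral.integral_eq_sub_of_hasDerivAt hderiv
    ((p.continuous.mul p.derivative.continuous).intervalIntegrable _ _)]
  ring

section Traces

variable {Nx : ℕ} (X : ℕ → ℝ) (u : ℕ → Polynomial ℝ)

theorem dgMinus_succ (j : ℕ) : dgMinus Nx X u (j + 1) = (u j).eval (X (j + 1)) := by
  simp [dgMinus]

theorem dgPlus_of_lt {j : ℕ} (hj : j < Nx) : dgPlus Nx X u j = (u j).eval (X j) := by
  simp [dgPlus, hj.ne]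

theorem dgPlus_periodic : dgPlus Nx X u Nx = dgPlus Nx X u 0 := by
  simp [dgPlus]

theorem dgMinus_periodic (hNx : 1 ≤ Nx) : dgMinus Nx X u Nx = dgMinus Nx X u 0 := by
  simp [dgMinus, Nat.one_le_iff_ne_zero.mp hNx]

theorem dgJump_periodic (hNx : 1 ≤ Nx) : dgJump Nx X u Nx = dgJump Nx X u 0 := by
  simp only [dgJump, dgMinus_periodic X u hNx, dgPlus_periodic X u]

theorem dgAvg_periodic (hNx : 1 ≤ Nx) : dgAvg Nx X u Nx = dgAvg Nx X u 0 := by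
  simp only [dgAvg, dgMinus_periodic X u hNx, dgPlus_periodic X u]

theorem dgGhat_periodic (hNx : 1 ≤ Nx) (vth : ℝ) (NH : ℕ) (Cf : ℕ → ℕ → Polynomial ℝ) (n : ℕ) :
    dgGhat vth NH Nx X Cf n Nx = dgGhat vth NH Nx X Cf n 0 := by
  simp only [dgGhat, dgMinus_periodic X _ hNx, dgPlus_periodic X _]

end Traces

section Poisson

variable (vth ρ0 β : ℝ) (k Nx : ℕ) (X : ℕ → ℝ) (C0f Ef Φf : ℕ → Polynomial ℝ)

/-- Testing the Poisson scheme on `I_j` with `ζ = E` and `ψ = 1` writes `v_th ∫_{I_j} E C₀` as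
the difference of `Ê e − e²/2 − ρ0 {Φ}` at the two ends of the cell, `e` being the trace of `E`
from inside the cell. -/
noncomputable def poissonTraceFlux (i : ℕ) (e : ℝ) : ℝ :=
  (dgAvg Nx X Ef i - β * dgJump Nx X Φf i) * e - e ^ 2 / 2 - ρ0 * dgAvg Nx X Φf i

theorem poissonTraceFlux_minus_sub_plus (i : ℕ) :
    poissonTraceFlux ρ0 β Nx X Ef Φf i (dgMinus Nx X Ef i)
        - poissonTraceFlux ρ0 β Nx X Ef Φf i (dgPlus Nx X Ef i)
      = β * (dgJump Nx X Φf i * dgJump Nx X Ef i) := by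
  simp only [poissonTraceFlux, dgJump, dgAvg]
  ring

theorem dgPoisson.cellInt_eField_mul (hP : dgPoisson vth ρ0 β k Nx X C0f Ef Φf) {j : ℕ}
    (hj : j < Nx) (hdegE : (Ef j).natDegree ≤ k) :
    vth * cellInt X j (fun x => (Ef j).eval x * (C0f j).eval x)
      = poissonTraceFlux ρ0 β Nx X Ef Φf (j + 1) (dgMinus Nx X Ef (j + 1))
        - poissonTraceFlux ρ0 β Nx X Ef Φf j (dgPlus Nx X Ef j) := by
  have hΦ := (hP j hj 1 (by simp)).1
  have hE := (hP j hj (Ef j) hdegE).2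
  have hsource : cellInt X j (fun x => (vth * (C0f j).eval x - ρ0) * (Ef j).eval x)
      = vth * cellInt X j (fun x => (Ef j).eval x * (C0f j).eval x)
        - ρ0 * cellInt X j (fun x => (Ef j).eval x) := by
    have hint : ∀ f : ℝ → ℝ, Continuous f → IntervalIntegrable f volume (X j) (X (j + 1)) :=
      fun f hf => hf.intervalIntegrable _ _
    simp only [cellInt]
    rw [← intervalIntegral.integral_const_mul, ← intervalIntegral.integral_const_mul,
      ← intervalIntegral.integral_sub (hint _ (by fun_prop)) (hint _ (by fun_prop))]
    congr 1
    funext x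
    ring
  simp only [Polynomial.derivative_one, Polynomial.eval_zero, Polynomial.eval_one, mul_zero,
    mul_one] at hΦ
  rw [cellInt, intervalIntegral.integral_zero] at hΦ
  rw [cellInt, Polynomial.integral_eval_mul_derivative_eval, hsource] at hE
  rw [dgMinus_succ, dgPlus_of_lt X Ef hj, poissonTraceFlux, poissonTraceFlux]
  linear_combination -hE - ρ0 * hΦ

theorem dgPoisson.sum_cellInt_eField_mul (hP : dgPoisson vth ρ0 β k Nx X C0f Ef Φf)
    (hNx : 1 ≤ Nx) (hdegE : ∀ j, (Ef j).natDegree ≤ k) :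
    vth * ∑ j ∈ range Nx, cellInt X j (fun x => (Ef j).eval x * (C0f j).eval x)
      = β * ∑ j ∈ range Nx, dgJump Nx X Φf j * dgJump Nx X Ef j := by
  set F : ℕ → ℝ := fun i => poissonTraceFlux ρ0 β Nx X Ef Φf i (dgMinus Nx X Ef i)
  set G : ℕ → ℝ := fun i => poissonTraceFlux ρ0 β Nx X Ef Φf i (dgPlus Nx X Ef i)
  have hF : F Nx = F 0 := by
    simp only [F, poissonTraceFlux, dgMinus_periodic X _ hNx, dgAvg_periodic X _ hNx,
      dgJump_periodic X _ hNx]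
  calc vth * ∑ j ∈ range Nx, cellInt X j (fun x => (Ef j).eval x * (C0f j).eval x)
      = ∑ j ∈ range Nx, (F (j + 1) - G j) := by
        rw [mul_sum]
        exact sum_congr rfl fun j hj =>
          hP.cellInt_eField_mul vth ρ0 β k Nx X C0f Ef Φf (mem_range.mp hj) (hdegE j)
    _ = ∑ j ∈ range Nx, (F j - G j) := by
        rw [sum_sub_distrib, sum_sub_distrib, sum_range_shift_of_eq F hF]
    _ = β * ∑ j ∈ range Nx, dgJump Nx X Φf j * dgJump Nx X Ef j := by
        rw [mul_sum]
        exact sum_congr rfl fun i _ => poissonTraceFlux_minus_sub_plus ρ0 β Nx X Ef Φf i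

end Poisson

section Momentum

variable (vth ρ0 β : ℝ) (k NH : ℕ) {Nx : ℕ} (X : ℕ → ℝ) (Cf : ℕ → ℕ → Polynomial ℝ)
  (Ef Φf : ℕ → Polynomial ℝ)

theorem dgA_one (n j : ℕ) :
    dgA vth NH Nx X Cf n j 1 = dgGhat vth NH Nx X Cf n (j + 1) - dgGhat vth NH Nx X Cf n j := by
  simp [dgA, cellInt]

theorem sum_dgA_one (hNx : 1 ≤ Nx) (n : ℕ) : ∑ j ∈ range Nx, dgA vth NH Nx X Cf n j 1 = 0 := by
  simp only [dgA_one, sum_range_sub, dgGhat_periodic X hNx, sub_self]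

theorem dgB_one_one (j : ℕ) :
    dgB vth β NH Nx X Cf Ef Φf 1 j 1
      = -(1 / vth) * cellInt X j (fun x => (Ef j).eval x * (Cf 0 j).eval x)
        - dgR1 vth β Nx X Ef Φf j 1 := by
  simp [dgB, dgR]

theorem sum_dgR1_one (hNx : 1 ≤ Nx) :
    ∑ j ∈ range Nx, dgR1 vth β Nx X Ef Φf j 1
      = -(β / vth ^ 2) * ∑ j ∈ range Nx, dgJump Nx X Φf j * dgJump Nx X Ef j := by
  have hshift := sum_range_shift_of_eq (n := Nx)
    (fun i => dgJump Nx X Φf i * dgJump Nx X Ef i) (by simp only [dgJump_periodic X _ hNx])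
  simp only [dgR1, Polynomial.eval_one, mul_one, ← mul_sum, sum_add_distrib, hshift]
  ring

theorem sum_dgB_one_one (hvth : vth ≠ 0) (hNx : 1 ≤ Nx)
    (hP : dgPoisson vth ρ0 β k Nx X (Cf 0) Ef Φf) (hdegE : ∀ j, (Ef j).natDegree ≤ k) :
    ∑ j ∈ range Nx, dgB vth β NH Nx X Cf Ef Φf 1 j 1 = 0 := by
  have hT := hP.sum_cellInt_eField_mul vth ρ0 β k Nx X (Cf 0) Ef Φf hNx hdegE
  rw [sum_congr rfl fun j _ => dgB_one_one vth β NH X Cf Ef Φf j, sum_sub_distrib, ← mul_sum,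
    sum_dgR1_one vth β X Ef Φf hNx]
  field_simp
  rw [hT]
  ring

end Momentum

theorem dg_semidiscrete_momentum_conservation_general
    (vth ρ0 β : ℝ) (k Nx NH : ℕ)
    (hvth : 0 < vth) (hNx : 1 ≤ Nx) (hNH : 3 ≤ NH)
    -- the partition `0 = x_{1/2} < … < x_{Nx+1/2} = L`
    (X : ℕ → ℝ)
    -- the numerical solution, cell by cell
    (C : ℕ → ℝ → ℕ → Polynomial ℝ) (E Φ : ℝ → ℕ → Polynomial ℝ)
    -- membership in `V_h^k`
    (hdegE : ∀ t j, (E t j).natDegree ≤ k)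
    -- C¹ regularity in time
    (hC1 : ∀ n j (φ : Polynomial ℝ),
      Differentiable ℝ fun t => cellInt X j fun x => (C n t j).eval x * φ.eval x)
    -- the modified semi-discrete DG scheme
    (hScheme : ∀ t : ℝ, ∀ n < NH, ∀ j < Nx, ∀ φ : Polynomial ℝ, φ.natDegree ≤ k →
      deriv (fun s => cellInt X j fun x => (C n s j).eval x * φ.eval x) t
        + dgA vth NH Nx X (fun m i => C m t i) n j φ
        + dgB vth β NH Nx X (fun m i => C m t i) (E t) (Φ t) n j φ = 0)
    -- the DG Poisson solver
    (hPoisson : ∀ t : ℝ, dgPoisson vth ρ0 β k Nx X (C 0 t) (E t) (Φ t)) :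
    ∀ t : ℝ, dgTotInt Nx X (C 1 t) = dgTotInt Nx X (C 1 0) := by
  let cell (j : ℕ) (s : ℝ) : ℝ :=
    cellInt X j fun x => (C 1 s j).eval x * (1 : Polynomial ℝ).eval x
  have hmomentum : (fun s => dgTotInt Nx X (C 1 s)) = fun s => ∑ j ∈ range Nx, cell j s := by
    simp [cell, dgTotInt]
  have hderiv (s : ℝ) : deriv (fun s => dgTotInt Nx X (C 1 s)) s = 0 := by
    have hcell (j : ℕ) (hj : j ∈ range Nx) : deriv (cell j) s
        = -(dgA vth NH Nx X (fun m i => C m s i) 1 j 1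
          + dgB vth β NH Nx X (fun m i => C m s i) (E s) (Φ s) 1 j 1) := by
      linarith [hScheme s 1 (by omega) j (mem_range.mp hj) 1 (by simp)]
    rw [hmomentum, deriv_fun_sum fun j _ => (hC1 1 j 1).differentiableAt,
      sum_congr rfl hcell, sum_neg_distrib, sum_add_distrib, sum_dgA_one vth NH X _ hNx,
      sum_dgB_one_one vth ρ0 β k NH X _ _ _ hvth.ne' hNx (hPoisson s) (hdegE s)]
    simp
  have hdiff : Differentiable ℝ fun s => dgTotInt Nx X (C 1 s) := by
    rw [hmomentum]
    exact Differentiable.fun_sum fun j _ => hC1 1 j 1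
  exact fun t => is_const_of_deriv_eq_zero hdiff hderiv t 0

/-- Conservation of the discrete momentum for the modified semi-discrete
discontinuous Galerkin scheme: `t ↦ ∫_0^L C_1(t,x) dx` is constant. -/
theorem dg_semidiscrete_momentum_conservation
    (L vth ρ0 β : ℝ) (k Nx NH : ℕ)
    (hL : 0 < L) (hvth : 0 < vth) (hβ : 0 < β) (hNx : 1 ≤ Nx) (hNH : 3 ≤ NH)
    -- the partition `0 = x_{1/2} < … < x_{Nx+1/2} = L`
    (X : ℕ → ℝ) (hX0 : X 0 = 0) (hXL : X Nx = L)
    (hXmono : ∀ j < Nx, X j < X (j + 1))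
    -- the numerical solution, cell by cell
    (C : ℕ → ℝ → ℕ → Polynomial ℝ) (E Φ : ℝ → ℕ → Polynomial ℝ)
    -- membership in `V_h^k`
    (hdegC : ∀ n t j, (C n t j).natDegree ≤ k)
    (hdegE : ∀ t j, (E t j).natDegree ≤ k)
    (hdegΦ : ∀ t j, (Φ t j).natDegree ≤ k)
    -- truncation convention `C_{N_H} = 0` (and beyond)
    (hCtop : ∀ n, NH ≤ n → ∀ t j, C n t j = 0)
    -- C¹ regularity in time
    (hC1 : ∀ n j (φ : Polynomial ℝ),
      Differentiable ℝ fun t => cellInt X j fun x => (C n t j).eval x * φ.eval x)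
    -- the modified semi-discrete DG scheme
    (hScheme : ∀ t : ℝ, ∀ n < NH, ∀ j < Nx, ∀ φ : Polynomial ℝ, φ.natDegree ≤ k →
      deriv (fun s => cellInt X j fun x => (C n s j).eval x * φ.eval x) t
        + dgA vth NH Nx X (fun m i => C m t i) n j φ
        + dgB vth β NH Nx X (fun m i => C m t i) (E t) (Φ t) n j φ = 0)
    -- the DG Poisson solver
    (hPoisson : ∀ t : ℝ, dgPoisson vth ρ0 β k Nx X (C 0 t) (E t) (Φ t)) :
    ∀ t : ℝ, dgTotInt Nx X (C 1 t) = dgTotInt Nx X (C 1 0) :=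
  dg_semidiscrete_momentum_conservation_general vth ρ0 β k Nx NH hvth hNx hNH X C E Φ hdegE hC1
    hScheme hPoisson
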